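/- Let F be a field of characteristic zero, β ∈ F, and let (y₁,ₙ), (y₂,ₙ) be sequences of nonzero elements of F with y₁,ₙ + β ≠ 0 for all n, satisfying y₁,ₙ₊₁·y₁,ₙ = (y₁,ₙ+β)²·y₂,ₙ + β and y₂,ₙ₊₁·y₂,ₙ·(y₁,ₙ+β)² = y₁,ₙ₊₁ + 1 for all n ≥ 0. Set wₙ = y₁,ₙ + β. Then (wₙ) satisfies the Lyness recurrence w_{n+1}·w_{n-1} = (1−β)·wₙ + (β·K + 2β² + β + 1) for all n ≥ 1, where K = K̃₁(y₁,₀, y₂,₀) is the value of the first integral K̃₁(y₁,y₂) = y₁y₂ + y₁ + (2β+1)y₂ + β(β+2)y₂/y₁ + β²y₂/y₁² + (3β+2)/y₁ + 1/y₂ + 2β/y₁² + 2/(y₁y₂) + 1/(y₁²y₂). -/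

import Mathlib

/-!
The recurrences say exactly that `(y₁,ₙ₊₁, y₂,ₙ₊₁) = φ̂₁(y₁,ₙ, y₂,ₙ)`. Two identities of rational
functions then finish the proof: `K̃₁ ∘ φ̂₁ = K̃₁`, and, writing `(y₁', y₂') = φ̂₁(y₁, y₂)` and
`y₁'' = (φ̂₁(y₁', y₂')).1`, `(y₁'' + β)(y₁ + β) = (1 - β)(y₁' + β) + β K̃₁(y₁, y₂) + 2β² + β + 1`.
-/

/-- The first integral `K̃₁` of the deformed B₃ map `φ̂₁` (case `b₁ = b₂ = β`,
`b₃ = 1`). -/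
noncomputable def KtilB3₁ {F : Type*} [Field F] (β y₁ y₂ : F) : F :=
  y₁ * y₂ + y₁ + (2 * β + 1) * y₂ + β * (β + 2) * y₂ / y₁ + β ^ 2 * y₂ / y₁ ^ 2 +
    (3 * β + 2) / y₁ + 1 / y₂ + 2 * β / y₁ ^ 2 + 2 / (y₁ * y₂) + 1 / (y₁ ^ 2 * y₂)

noncomputable def deformedB3Map₁ {F : Type*} [Field F] (β : F) (p : F × F) : F × F :=
  (((p.1 + β) ^ 2 * p.2 + β) / p.1, (1 + 1 / (p.2 * (p.1 + β))) / p.1)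

namespace deformedB3Map₁

variable {F : Type*} [Field F] {β x y : F}

theorem eq_of_recurrence {c d : F} (hx : x ≠ 0) (hy : y ≠ 0) (hxβ : x + β ≠ 0)
    (hc : c * x = (x + β) ^ 2 * y + β) (hd : d * y * (x + β) ^ 2 = c + 1) :
    deformedB3Map₁ β (x, y) = (c, d) := by
  refine Prod.ext (eq_div_of_mul_eq hx hc).symm ?_
  simp only [deformedB3Map₁]
  field_simp
  refine mul_right_cancel₀ hxβ ?_
  linear_combination -hc - x * hd

theorem KtilB3₁_invariant (hx : x ≠ 0) (hy : y ≠ 0) (hxβ : x + β ≠ 0)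
    (hc : (deformedB3Map₁ β (x, y)).1 ≠ 0) (hd : (deformedB3Map₁ β (x, y)).2 ≠ 0) :
    KtilB3₁ β (deformedB3Map₁ β (x, y)).1 (deformedB3Map₁ β (x, y)).2 = KtilB3₁ β x y := by
  simp only [deformedB3Map₁, ne_eq, div_eq_zero_iff, hx, or_false] at hc hd
  have hxβy : (x + β) * y + 1 ≠ 0 := by
    contrapose! hd
    field_simp
    linear_combination hd
  simp only [deformedB3Map₁, KtilB3₁]
  field_simp
  ring

theorem lyness (hx : x ≠ 0) (hy : y ≠ 0) (hxβ : x + β ≠ 0)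
    (hc : (deformedB3Map₁ β (x, y)).1 ≠ 0) :
    ((deformedB3Map₁ β (deformedB3Map₁ β (x, y))).1 + β) * (x + β) =
      (1 - β) * ((deformedB3Map₁ β (x, y)).1 + β) + (β * KtilB3₁ β x y + 2 * β ^ 2 + β + 1) := by
  simp only [deformedB3Map₁, ne_eq, div_eq_zero_iff, hx, or_false] at hc
  simp only [deformedB3Map₁, KtilB3₁]
  field_simp
  ring

end deformedB3Map₁

theorem deformed_B3_map1_lyness_general {F : Type*} [Field F] (β : F)
    (y₁ y₂ : ℕ → F)
    (h₁ : ∀ n, y₁ n ≠ 0) (h₂ : ∀ n, y₂ n ≠ 0) (hβ : ∀ n, y₁ n + β ≠ 0)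
    (e₁ : ∀ n, y₁ (n + 1) * y₁ n = (y₁ n + β) ^ 2 * y₂ n + β)
    (e₂ : ∀ n, y₂ (n + 1) * y₂ n * (y₁ n + β) ^ 2 = y₁ (n + 1) + 1)
    (w : ℕ → F) (hw : ∀ n, w n = y₁ n + β) :
    ∀ n, w (n + 2) * w n = (1 - β) * w (n + 1) +
      (β * KtilB3₁ β (y₁ 0) (y₂ 0) + 2 * β ^ 2 + β + 1) := by
  have orbit : ∀ n, deformedB3Map₁ β (y₁ n, y₂ n) = (y₁ (n + 1), y₂ (n + 1)) := fun n =>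
    deformedB3Map₁.eq_of_recurrence (h₁ n) (h₂ n) (hβ n) (e₁ n) (e₂ n)
  have invariant : ∀ n, KtilB3₁ β (y₁ n) (y₂ n) = KtilB3₁ β (y₁ 0) (y₂ 0) := by
    intro n
    induction n with
    | zero => rfl
    | succ n ih =>
      have step := deformedB3Map₁.KtilB3₁_invariant (h₁ n) (h₂ n) (hβ n)
        (by rw [orbit]; exact h₁ (n + 1)) (by rw [orbit]; exact h₂ (n + 1))
      rw [orbit] at step
      rw [step, ih]
  intro n
  have lyness := deformedB3Map₁.lyness (h₁ n) (h₂ n) (hβ n) (by rw [orbit]; exact h₁ (n + 1))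
  rw [orbit, orbit] at lyness
  rw [hw, hw, hw, ← invariant n, lyness]

/-- along orbits of the deformed B₃ map `φ̂₁`, the quantity
`wₙ = y₁,ₙ + β` satisfies the Lyness recurrence
`w_{n+1}w_{n-1} = (1−β)wₙ + (βK + 2β² + β + 1)`, where `K` is the value of the
first integral `K̃₁`. -/
theorem deformed_B3_map1_lyness {F : Type*} [Field F] [CharZero F] (β : F)
    (y₁ y₂ : ℕ → F)
    (h₁ : ∀ n, y₁ n ≠ 0) (h₂ : ∀ n, y₂ n ≠ 0) (hβ : ∀ n, y₁ n + β ≠ 0)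
    (e₁ : ∀ n, y₁ (n + 1) * y₁ n = (y₁ n + β) ^ 2 * y₂ n + β)
    (e₂ : ∀ n, y₂ (n + 1) * y₂ n * (y₁ n + β) ^ 2 = y₁ (n + 1) + 1)
    (w : ℕ → F) (hw : ∀ n, w n = y₁ n + β) :
    ∀ n, w (n + 2) * w n = (1 - β) * w (n + 1) +
      (β * KtilB3₁ β (y₁ 0) (y₂ 0) + 2 * β ^ 2 + β + 1) :=
  deformed_B3_map1_lyness_general β y₁ y₂ h₁ h₂ hβ e₁ e₂ w hw
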